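/- (Lemma 1, upper bound) In the symmetric model, the no-interference average rate satisfies R_up(n) ≤ log₂(ρ·log n) + log₂(log n)/log n + o(log(log n)/log n); that is, there is a function h with h(n)·log n/log(log n) → 0 such that for all sufficiently large n, E[log₂(1+α^up_n)] ≤ log₂(ρ·log n) + log₂(log n)/log n + h(n). -/

import Mathlib

open MeasureTheory ProbabilityTheory Filter Real

/-- The maximum of `f k` over the indices `k ∈ {1, …, n}`. -/
noncomputable def maxIcc (n : ℕ) (f : ℕ → ℝ) : ℝ :=
  ⨆ k : (Finset.Icc 1 n : Finset ℕ), f k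

/-!
With `L = log n`, the maximum of `n` standard exponentials `Gₖ` is at most `L + S`, where
`S = ∑ₖ (Gₖ - L)⁺` has mean `n e^{-L} = 1`. Bounding `log` by its tangent at `1 + ρL` gives
`E log (1 + α^up_n) ≤ log (1 + ρL) + ρ / (1 + ρL) ≤ log (ρL) + (1/ρ + 1) / L`, so the error term
is `O(1 / log n) = o(log log n / log n)`.
-/

open Set Topology
open scoped ENNReal

section ExponentialTail

lemma hasDerivAt_neg_sub_add_one_mul_exp_neg (t x : ℝ) :
    HasDerivAt (fun x => -(x - t + 1) * exp (-x)) ((x - t) * exp (-x)) x := by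
  refine ((((hasDerivAt_id' x).sub_const t).add_const 1).neg.mul
    (hasDerivAt_neg x).exp).congr_deriv ?_
  simp only [Pi.neg_apply]
  ring

lemma tendsto_neg_sub_add_one_mul_exp_neg_atTop (t : ℝ) :
    Tendsto (fun x => -(x - t + 1) * exp (-x)) atTop (𝓝 0) := by
  have hx : Tendsto (fun x : ℝ => x * exp (-x)) atTop (𝓝 0) := by
    simpa using tendsto_pow_mul_exp_neg_atTop_nhds_zero 1
  simpa [neg_add_eq_sub, sub_mul] using
    (tendsto_exp_neg_atTop_nhds_zero.const_mul (t - 1)).sub hx |>.congr fun x => by ring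

lemma integrableOn_Ioi_sub_mul_exp_neg (t : ℝ) :
    IntegrableOn (fun x => (x - t) * exp (-x)) (Ioi t) :=
  integrableOn_Ioi_deriv_of_nonneg (by fun_prop)
    (fun x _ => hasDerivAt_neg_sub_add_one_mul_exp_neg t x)
    (fun x hx => mul_nonneg (sub_nonneg.2 (le_of_lt hx)) (exp_nonneg _))
    (tendsto_neg_sub_add_one_mul_exp_neg_atTop t)

lemma integral_Ioi_sub_mul_exp_neg (t : ℝ) : ∫ x in Ioi t, (x - t) * exp (-x) = exp (-t) := by
  rw [integral_Ioi_of_hasDerivAt_of_tendsto (by fun_prop)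
    (fun x _ => hasDerivAt_neg_sub_add_one_mul_exp_neg t x) (integrableOn_Ioi_sub_mul_exp_neg t)
    (tendsto_neg_sub_add_one_mul_exp_neg_atTop t)]
  simp

lemma exponentialPDFReal_one_toNNReal_smul_max_sub {t : ℝ} (ht : 0 ≤ t) (x : ℝ) :
    (exponentialPDFReal 1 x).toNNReal • max (x - t) 0
      = (Ioi t).indicator (fun x => (x - t) * exp (-x)) x := by
  rw [NNReal.smul_def, smul_eq_mul]
  rcases lt_or_ge t x with htx | hxt
  · have hpdf : exponentialPDFReal 1 x = exp (-x) := by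
      simp [exponentialPDFReal, gammaPDFReal, ht.trans htx.le]
    rw [indicator_of_mem (mem_Ioi.2 htx), hpdf, Real.coe_toNNReal _ (exp_nonneg _),
      max_eq_left (by linarith), mul_comm]
  · rw [indicator_of_notMem (notMem_Ioi.2 hxt), max_eq_right (by linarith), mul_zero]

lemma expMeasure_one_eq_withDensity :
    expMeasure 1 = volume.withDensity fun x => ((exponentialPDFReal 1 x).toNNReal : ℝ≥0∞) := rfl

lemma integrable_max_sub_expMeasure_one {t : ℝ} (ht : 0 ≤ t) :
    Integrable (fun x => max (x - t) 0) (expMeasure 1) := by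
  rw [expMeasure_one_eq_withDensity, integrable_withDensity_iff_integrable_smul
    (measurable_exponentialPDFReal 1).real_toNNReal]
  simp_rw [exponentialPDFReal_one_toNNReal_smul_max_sub ht]
  exact (integrable_indicator_iff measurableSet_Ioi).2 (integrableOn_Ioi_sub_mul_exp_neg t)

lemma integral_max_sub_expMeasure_one {t : ℝ} (ht : 0 ≤ t) :
    ∫ x, max (x - t) 0 ∂expMeasure 1 = exp (-t) := by
  rw [expMeasure_one_eq_withDensity, integral_withDensity_eq_integral_smul
    (measurable_exponentialPDFReal 1).real_toNNReal]
  simp_rw [exponentialPDFReal_one_toNNReal_smul_max_sub ht]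
  rw [integral_indicator measurableSet_Ioi, integral_Ioi_sub_mul_exp_neg]

end ExponentialTail

lemma ae_nonneg_expMeasure (r : ℝ) : ∀ᵐ x ∂expMeasure r, 0 ≤ x := by
  rw [ae_iff]
  simp only [not_le]
  exact (withDensity_apply _ measurableSet_Iio).trans (lintegral_exponentialPDF_of_nonpos le_rfl)

section MaxIcc

variable {n : ℕ} {f : ℕ → ℝ}

lemma le_maxIcc {k : ℕ} (hk : k ∈ Finset.Icc 1 n) : f k ≤ maxIcc n f :=
  le_ciSup (f := fun k : Finset.Icc 1 n => f k) (finite_range _).bddAbove ⟨k, hk⟩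

lemma maxIcc_le {t : ℝ} (hn : 1 ≤ n) (h : ∀ k ∈ Finset.Icc 1 n, f k ≤ t) : maxIcc n f ≤ t :=
  have : Nonempty (Finset.Icc 1 n) := ⟨⟨1, Finset.mem_Icc.2 ⟨le_rfl, hn⟩⟩⟩
  ciSup_le fun k => h k k.2

lemma maxIcc_const_mul {c : ℝ} (hc : 0 ≤ c) : maxIcc n (fun k => c * f k) = c * maxIcc n f :=
  (Real.mul_iSup_of_nonneg hc _).symm

lemma maxIcc_le_add_sum_max_sub (hn : 1 ≤ n) (t : ℝ) :
    maxIcc n f ≤ t + ∑ k ∈ Finset.Icc 1 n, max (f k - t) 0 :=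
  maxIcc_le hn fun k hk => by
    have := Finset.single_le_sum (f := fun k => max (f k - t) 0) (fun _ _ => le_max_right _ _) hk
    linarith [le_max_left (f k - t) 0]

end MaxIcc

lemma log_le_log_add_sub_div {x c : ℝ} (hx : 0 < x) (hc : 0 < c) :
    log x ≤ log c + (x - c) / c := by
  have := log_le_sub_one_of_pos (div_pos hx hc)
  rw [log_div hx.ne' hc.ne', div_sub_one hc.ne'] at this
  linarith

lemma log_one_add_mul_add_div_le {ρ L : ℝ} (hρ : 0 < ρ) (hL : 0 < L) :
    log (1 + ρ * L) + ρ / (1 + ρ * L) ≤ log (ρ * L) + (1 / ρ + 1) / L := by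
  have hρL : 0 < ρ * L := mul_pos hρ hL
  have hlog : log (1 + ρ * L) ≤ log (ρ * L) + 1 / ρ / L := by
    have := log_le_log_add_sub_div (by positivity : 0 < 1 + ρ * L) hρL
    rwa [add_sub_cancel_right, ← div_div] at this
  have hfrac : ρ / (1 + ρ * L) ≤ 1 / L := by
    rw [div_le_div_iff₀ (by positivity) hL]
    linarith
  rw [add_div]
  linarith

section

variable {Ω : Type*} [MeasurableSpace Ω] {P : Measure Ω} [IsProbabilityMeasure P]

theorem integral_log_one_add_mul_maxIcc_le {X : ℕ → Ω → ℝ}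
    (hX : ∀ k, HasLaw (X k) (expMeasure 1) P) {ρ t : ℝ} (hρ : 0 ≤ ρ) (ht : 0 ≤ t) {n : ℕ}
    (hn : 1 ≤ n) :
    ∫ ω, log (1 + ρ * maxIcc n (fun k => X k ω)) ∂P
      ≤ log (1 + ρ * t) + ρ * (n * exp (-t)) / (1 + ρ * t) := by
  set c := 1 + ρ * t
  have hc : 0 < c := by positivity
  set S : Ω → ℝ := fun ω => ∑ k ∈ Finset.Icc 1 n, max (X k ω - t) 0
  have hint : ∀ k, Integrable (fun ω => max (X k ω - t) 0) P := fun k =>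
    ((hX k).map_eq ▸ integrable_max_sub_expMeasure_one ht).comp_aemeasurable (hX k).aemeasurable
  have hS_int : Integrable S P := integrable_finsetSum _ fun k _ => hint k
  have hS_mean : ∫ ω, S ω ∂P = n * exp (-t) := by
    rw [integral_finsetSum _ fun k _ => hint k]
    have hmean : ∀ k, ∫ ω, max (X k ω - t) 0 ∂P = exp (-t) := fun k => by
      rw [← integral_max_sub_expMeasure_one ht]
      exact (hX k).integral_comp (f := fun x => max (x - t) 0) (by fun_prop)
    simp [hmean]
  have hM_nonneg : ∀ᵐ ω ∂P, 0 ≤ maxIcc n (fun k => X k ω) := by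
    have hX₁ : ∀ᵐ ω ∂P, 0 ≤ X 1 ω :=
      (hX 1).ae_iff (p := (0 ≤ ·)) measurableSet_Ici.mem |>.2 (ae_nonneg_expMeasure 1)
    filter_upwards [hX₁] with ω hω
    exact hω.trans (le_maxIcc (f := fun k => X k ω) (Finset.mem_Icc.2 ⟨le_rfl, hn⟩))
  have htangent : ∀ᵐ ω ∂P, log (1 + ρ * maxIcc n (fun k => X k ω)) ≤ log c + ρ / c * S ω := by
    filter_upwards [hM_nonneg] with ω hω
    have hM : maxIcc n (fun k => X k ω) ≤ t + S ω := maxIcc_le_add_sum_max_sub hn t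
    calc log (1 + ρ * maxIcc n (fun k => X k ω))
        ≤ log c + (1 + ρ * maxIcc n (fun k => X k ω) - c) / c :=
          log_le_log_add_sub_div (by positivity) hc
      _ ≤ log c + ρ / c * S ω := by
          rw [div_mul_eq_mul_div]
          gcongr
          nlinarith
  calc ∫ ω, log (1 + ρ * maxIcc n (fun k => X k ω)) ∂P
      ≤ ∫ ω, log c + ρ / c * S ω ∂P :=
        integral_mono_of_nonneg (hM_nonneg.mono fun ω hω => log_nonneg (by nlinarith))
          ((integrable_const _).add (hS_int.const_mul _)) htangent
    _ = log c + ρ * (n * exp (-t)) / c := by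
        rw [integral_add (integrable_const _) (hS_int.const_mul _), integral_const,
          integral_const_mul, hS_mean]
        simp [div_mul_eq_mul_div]

end

lemma tendsto_const_div_log_mul_log_div_log_log (K : ℝ) :
    Tendsto (fun n : ℕ => K / log n * log n / log (log n)) atTop (𝓝 0) := by
  have hlog : Tendsto (fun n : ℕ => log n) atTop atTop :=
    tendsto_log_atTop.comp tendsto_natCast_atTop_atTop
  refine ((tendsto_const_nhds (x := K)).div_atTop (tendsto_log_atTop.comp hlog)).congr' ?_
  filter_upwards [hlog.eventually_gt_atTop 0] with n hn
  simp [hn.ne']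

lemma one_le_log_natCast {n : ℕ} (hn : 3 ≤ n) : 1 ≤ log n := by
  rw [le_log_iff_exp_le (by positivity)]
  exact exp_one_lt_three.le.trans (by exact_mod_cast hn)

theorem no_interference_rate_upper_bound_general
    {Ω : Type*} [MeasurableSpace Ω] (P : Measure Ω) [IsProbabilityMeasure P]
    (N : ℕ) (ρ : ℝ) (hρ : 0 < ρ)
    (G : Option (Fin N) × ℕ → Ω → ℝ) (hGmeas : ∀ i, Measurable (G i))
    (hGdist : ∀ i, Measure.map (G i) P = expMeasure 1)
    (α : ℕ → Ω → ℝ)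
    (hα : ∀ k ω, α k ω = ρ * G (none, k) ω)
    (αup : ℕ → Ω → ℝ) (hαup : ∀ n ω, αup n ω = maxIcc n (fun k => α k ω)) :
    ∃ h : ℕ → ℝ,
      Tendsto (fun n : ℕ => h n * Real.log n / Real.log (Real.log n)) atTop (nhds 0) ∧
      ∀ᶠ n : ℕ in atTop,
        (∫ ω, Real.logb 2 (1 + αup n ω) ∂P)
          ≤ Real.logb 2 (ρ * Real.log n) + Real.logb 2 (Real.log n) / Real.log n + h n := by
  set K := (1 / ρ + 1) / log 2
  refine ⟨fun n => K / log n, tendsto_const_div_log_mul_log_div_log_log K, ?_⟩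
  filter_upwards [eventually_ge_atTop 3] with n hn
  have hL : 1 ≤ log n := one_le_log_natCast hn
  have hlaw : ∀ k, HasLaw (G (none, k)) (expMeasure 1) P := fun k =>
    ⟨(hGmeas _).aemeasurable, hGdist _⟩
  have hrate : ∫ ω, log (1 + αup n ω) ∂P ≤ log (ρ * log n) + (1 / ρ + 1) / log n := by
    simp_rw [hαup, hα, maxIcc_const_mul hρ.le]
    calc _ ≤ log (1 + ρ * log n) + ρ * (n * exp (-log n)) / (1 + ρ * log n) :=
          integral_log_one_add_mul_maxIcc_le hlaw hρ.le (by linarith) (by omega)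
      _ = log (1 + ρ * log n) + ρ / (1 + ρ * log n) := by
          rw [exp_neg, exp_log (by positivity), mul_inv_cancel₀ (by positivity), mul_one]
      _ ≤ _ := log_one_add_mul_add_div_le hρ (by linarith)
  have hlogb : 0 ≤ logb 2 (log n) / log n :=
    div_nonneg (logb_nonneg one_lt_two hL) (by linarith)
  calc ∫ ω, logb 2 (1 + αup n ω) ∂P = (∫ ω, log (1 + αup n ω) ∂P) / log 2 := integral_div _ _
    _ ≤ (log (ρ * log n) + (1 / ρ + 1) / log n) / log 2 := by gcongr
    _ = logb 2 (ρ * log n) + K / log n := by rw [logb]; ring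
    _ ≤ _ := by linarith

/-- Lemma 1, upper bound: in the symmetric model, the no-interference average rate
satisfies `E[log₂(1+α^up n)] ≤ log₂(ρ log n) + log₂(log n)/log n + o(log(log n)/log n)`. -/
theorem no_interference_rate_upper_bound
    {Ω : Type*} [MeasurableSpace Ω] (P : Measure Ω) [IsProbabilityMeasure P]
    (N : ℕ) (hN : 1 ≤ N) (ρ : ℝ) (hρ : 0 < ρ)
    (G : Option (Fin N) × ℕ → Ω → ℝ) (hGmeas : ∀ i, Measurable (G i))
    (hGindep : iIndepFun G P)
    (hGdist : ∀ i, Measure.map (G i) P = expMeasure 1)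
    (α β : ℕ → Ω → ℝ)
    (hα : ∀ k ω, α k ω = ρ * G (none, k) ω)
    (hβ : ∀ k ω, β k ω = ρ * ∑ j : Fin N, G (some j, k) ω)
    (αup : ℕ → Ω → ℝ) (hαup : ∀ n ω, αup n ω = maxIcc n (fun k => α k ω)) :
    ∃ h : ℕ → ℝ,
      Tendsto (fun n : ℕ => h n * Real.log n / Real.log (Real.log n)) atTop (nhds 0) ∧
      ∀ᶠ n : ℕ in atTop,
        (∫ ω, Real.logb 2 (1 + αup n ω) ∂P)
          ≤ Real.logb 2 (ρ * Real.log n) + Real.logb 2 (Real.log n) / Real.log n + h n :=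
  no_interference_rate_upper_bound_general P N ρ hρ G hGmeas hGdist α hα αup hαup
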